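/- arXiv:2403.03936 — 6 statements merged into one kernel-verified Lean document; each statement's English description precedes it below -/
import Mathlib

section
/- Let g be a C^{n+1} function on [1,2] such that the C^n norm of g' is at most β and such that max_{1≤k≤n} min_{x∈[1,2]} |g^{(k)}(x)| = σ > 0. Then for every ρ > 0 the Lebesgue measure of {x ∈ [1,2] : |g(x)| ≤ ρ} is at most C_n (β σ^{−1} + 1)(ρ σ^{−1})^{1/n}, where C_n depends only on n. -/
/-!
Induction on the order `k` of the derivative bounded below (the van der Corput sublevel-set
argument). For `k = 1`, the mean value theorem confines `{|g| ≤ ρ}` to an interval of length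
`2ρ/σ`. For `k + 1`, the set where `|g⁽ᵏ⁾| ≤ σδ` lies in an interval of length `2δ`; on either side
of it `|g⁽ᵏ⁾| ≥ σδ`, and the induction hypothesis gives measure `≲ (ρ/(σδ))^(1/k)`. The choice
`δ = (ρ/σ)^(1/(k+1))` balances the two terms. Finally `{|g| ≤ ρ}` also has measure at most `1`,
which handles `ρ > σ`, where `(ρ/σ)^(1/k)` exceeds `(ρ/σ)^(1/n)`.
-/

open Set Real MeasureTheory

theorem ContDiffAt.differentiableAt_iteratedDeriv {𝕜 F : Type*} [NontriviallyNormedField 𝕜]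
    [NormedAddCommGroup F] [NormedSpace 𝕜 F] {f : 𝕜 → F} {x : 𝕜} {n : WithTop ℕ∞} {j : ℕ}
    (hf : ContDiffAt 𝕜 n f x) (hj : (j : WithTop ℕ∞) + 1 ≤ n) :
    DifferentiableAt 𝕜 (iteratedDeriv j f) x :=
  ((hf.iteratedFDeriv_right (m := 1) (by rwa [add_comm])).differentiableAt one_ne_zero
    ).continuousMultilinear_apply_const _

theorem DifferentiableAt.hasDerivAt_iteratedDeriv {f : ℝ → ℝ} {x : ℝ} {i : ℕ}
    (hf : DifferentiableAt ℝ (iteratedDeriv i f) x) :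
    HasDerivAt (iteratedDeriv i f) (iteratedDeriv (i + 1) f x) x := by
  rw [iteratedDeriv_succ]
  exact hf.hasDerivAt

theorem Set.OrdConnected.mul_sub_le_abs_sub {s : Set ℝ} (hs : s.OrdConnected) {f f' : ℝ → ℝ}
    {σ : ℝ} (hf : ∀ x ∈ s, HasDerivAt f (f' x) x) (hσf : ∀ x ∈ s, σ ≤ |f' x|)
    {x y : ℝ} (hx : x ∈ s) (hy : y ∈ s) (hxy : x ≤ y) : σ * (y - x) ≤ |f y - f x| := by
  rcases hxy.eq_or_lt with rfl | hxy
  · simp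
  have hsub : Icc x y ⊆ s := hs.out hx hy
  obtain ⟨c, hc, hslope⟩ := exists_hasDerivAt_eq_slope f f' hxy
    (fun z hz => (hf z (hsub hz)).continuousAt.continuousWithinAt)
    (fun z hz => hf z (hsub (Ioo_subset_Icc_self hz)))
  have hσc := hσf c (hsub (Ioo_subset_Icc_self hc))
  rwa [hslope, abs_div, abs_of_pos (sub_pos.2 hxy), le_div_iff₀ (sub_pos.2 hxy)] at hσc

theorem exists_subset_Icc_add_of_sub_le {t : Set ℝ} {L : ℝ}
    (ht : ∀ x ∈ t, ∀ y ∈ t, x ≤ y → y - x ≤ L) : ∃ c, t ⊆ Icc c (c + L) := by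
  rcases t.eq_empty_or_nonempty with rfl | ⟨y₀, hy₀⟩
  · exact ⟨0, empty_subset _⟩
  have hlower : ∀ y ∈ t, y - L ∈ lowerBounds t := fun y hy x hx => by
    rcases le_total x y with hxy | hyx
    · linarith [ht x hx y hy hxy]
    · linarith [ht y hy y hy le_rfl]
  refine ⟨sInf t, fun y hy => ⟨csInf_le ⟨_, hlower y₀ hy₀⟩ hy, ?_⟩⟩
  linarith [le_csInf ⟨y₀, hy₀⟩ (hlower y hy)]

theorem Set.OrdConnected.exists_sublevel_subset_Icc {s : Set ℝ} (hs : s.OrdConnected)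
    {f f' : ℝ → ℝ} {σ M : ℝ} (hσ : 0 < σ) (hf : ∀ x ∈ s, HasDerivAt f (f' x) x)
    (hσf : ∀ x ∈ s, σ ≤ |f' x|) : ∃ c, {x ∈ s | |f x| ≤ M} ⊆ Icc c (c + 2 * M / σ) := by
  refine exists_subset_Icc_add_of_sub_le fun x hx y hy hxy => ?_
  have hmvt := hs.mul_sub_le_abs_sub hf hσf hx.1 hy.1 hxy
  rw [le_div_iff₀ hσ]
  linarith [abs_sub (f y) (f x), hx.2, hy.2]

theorem Set.OrdConnected.volume_sublevel_le {s : Set ℝ} (hs : s.OrdConnected) {f f' : ℝ → ℝ}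
    {σ M : ℝ} (hσ : 0 < σ) (hf : ∀ x ∈ s, HasDerivAt f (f' x) x) (hσf : ∀ x ∈ s, σ ≤ |f' x|) :
    volume {x ∈ s | |f x| ≤ M} ≤ ENNReal.ofReal (2 * M / σ) := by
  obtain ⟨c, hc⟩ := hs.exists_sublevel_subset_Icc (M := M) hσ hf hσf
  simpa using measure_mono (μ := volume) hc

theorem volume_sep_le_Iio_add_Ioi (s : Set ℝ) (p : ℝ → Prop) (c L : ℝ) :
    volume {x ∈ s | p x} ≤
      volume {x ∈ s ∩ Iio c | p x} + ENNReal.ofReal L + volume {x ∈ s ∩ Ioi (c + L) | p x} := by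
  have hcover : {x ∈ s | p x} ⊆
      {x ∈ s ∩ Iio c | p x} ∪ Icc c (c + L) ∪ {x ∈ s ∩ Ioi (c + L) | p x} := by
    rintro x ⟨hxs, hpx⟩
    rcases lt_or_ge x c with hxc | hcx
    · exact Or.inl (Or.inl ⟨⟨hxs, hxc⟩, hpx⟩)
    rcases le_or_gt x (c + L) with hxd | hdx
    · exact Or.inl (Or.inr ⟨hcx, hxd⟩)
    · exact Or.inr ⟨⟨hxs, hdx⟩, hpx⟩
  refine (measure_mono hcover).trans <| (measure_union_le _ _).trans <|
    add_le_add_left ((measure_union_le _ _).trans (add_le_add_right ?_ _)) _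
  simp

theorem rpow_div_rpow_one_div_succ {t : ℝ} (ht : 0 < t) {k : ℕ} (hk : k ≠ 0) :
    (t / t ^ ((1 : ℝ) / (k + 1))) ^ ((1 : ℝ) / k) = t ^ ((1 : ℝ) / (k + 1)) := by
  nth_rw 1 [← rpow_one t]
  rw [← rpow_sub ht, ← rpow_mul ht.le]
  congr 1
  field_simp
  ring

theorem Set.OrdConnected.volume_sublevel_le_of_le_abs_iteratedDeriv {s : Set ℝ}
    (hs : s.OrdConnected) {g : ℝ → ℝ} {k : ℕ} (hk : 1 ≤ k)
    (hg : ∀ i < k, ∀ x ∈ s, DifferentiableAt ℝ (iteratedDeriv i g) x) {σ ρ : ℝ} (hσ : 0 < σ)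
    (hρ : 0 < ρ) (hσg : ∀ x ∈ s, σ ≤ |iteratedDeriv k g x|) :
    volume {x ∈ s | |g x| ≤ ρ} ≤ ENNReal.ofReal (3 ^ k * (ρ / σ) ^ ((1 : ℝ) / k)) := by
  induction k, hk using Nat.le_induction generalizing s σ with
  | base =>
    have h := hs.volume_sublevel_le (M := ρ) hσ
      (fun x hx => (hg 0 one_pos x hx).hasDerivAt_iteratedDeriv) hσg
    simp only [iteratedDeriv_zero] at h
    refine h.trans (ENNReal.ofReal_le_ofReal ?_)
    rw [Nat.cast_one, div_one, rpow_one]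
    linarith [div_pos hρ hσ, mul_div_assoc 2 ρ σ]
  | succ k hk ih =>
    -- `δ` is chosen so that `(ρ / (σ * δ)) ^ (1 / k) = δ`.
    set δ := (ρ / σ) ^ ((1 : ℝ) / (k + 1))
    have hδ : 0 < δ := rpow_pos_of_pos (div_pos hρ hσ) _
    obtain ⟨c, hc⟩ := hs.exists_sublevel_subset_Icc (M := σ * δ) hσ
      (fun x hx => (hg k k.lt_succ_self x hx).hasDerivAt_iteratedDeriv) hσg
    rw [mul_div_assoc, mul_div_cancel_left₀ _ hσ.ne'] at hc
    have hside : ∀ u : Set ℝ, u.OrdConnected → Disjoint u (Icc c (c + 2 * δ)) →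
        volume {x ∈ s ∩ u | |g x| ≤ ρ} ≤ ENNReal.ofReal (3 ^ k * δ) := by
      intro u hu hdisj
      have h := ih (hs.inter hu) (fun i hi x hx => hg i (by omega) x hx.1) (mul_pos hσ hδ)
        fun x hx => by
          by_contra! hlt
          exact hdisj.ne_of_mem hx.2 (hc ⟨hx.1, hlt.le⟩) rfl
      rwa [← div_div, rpow_div_rpow_one_div_succ (div_pos hρ hσ) (by omega)] at h
    have h3k : (3 : ℝ) ≤ 3 ^ k := le_self_pow₀ (by norm_num) (by omega)
    calc volume {x ∈ s | |g x| ≤ ρ}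
        ≤ ENNReal.ofReal (3 ^ k * δ) + ENNReal.ofReal (2 * δ) + ENNReal.ofReal (3 ^ k * δ) :=
          (volume_sep_le_Iio_add_Ioi s _ c (2 * δ)).trans <| add_le_add
            (add_le_add_left (hside _ ordConnected_Iio
              (disjoint_left.2 fun x hx hx' => hx'.1.not_gt hx)) _)
            (hside _ ordConnected_Ioi (disjoint_left.2 fun x hx hx' => hx'.2.not_gt hx))
      _ = ENNReal.ofReal ((2 * 3 ^ k + 2) * δ) := by
          rw [← ENNReal.ofReal_add (by positivity) (by positivity),
            ← ENNReal.ofReal_add (by positivity) (by positivity)]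
          ring_nf
      _ ≤ ENNReal.ofReal (3 ^ (k + 1) * ((ρ / σ) ^ ((1 : ℝ) / ↑(k + 1)))) := by
          push_cast
          exact ENNReal.ofReal_le_ofReal (by rw [pow_succ]; nlinarith)

theorem min_one_pow_mul_rpow_le {a t : ℝ} (ha : 1 ≤ a) (ht : 0 ≤ t) {k n : ℕ} (hk : 1 ≤ k)
    (hkn : k ≤ n) : min 1 (a ^ k * t ^ ((1 : ℝ) / k)) ≤ a ^ n * t ^ ((1 : ℝ) / n) := by
  have hn : (0 : ℝ) < n := by exact_mod_cast hk.trans hkn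
  rcases le_total t 1 with ht1 | ht1
  · refine (min_le_right _ _).trans (mul_le_mul (pow_le_pow_right₀ ha hkn) ?_
      (by positivity) (by positivity))
    refine rpow_le_rpow_of_exponent_ge' ht ht1 (by positivity) ?_
    gcongr
  · calc min 1 (a ^ k * t ^ ((1 : ℝ) / k)) ≤ 1 * 1 := by simp
      _ ≤ a ^ n * t ^ ((1 : ℝ) / n) :=
        mul_le_mul (one_le_pow₀ ha) (one_le_rpow ht1 (by positivity)) zero_le_one (by positivity)

theorem stmt8_general (n : ℕ) :
    ∃ C : ℝ, 0 < C ∧ ∀ (g : ℝ → ℝ) (β σ ρ : ℝ),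
      ContDiffOn ℝ (n + 1) g (Set.Icc 1 2) →
      (∀ k ≤ n, ∀ x ∈ Set.Icc (1:ℝ) 2, |iteratedDeriv (k + 1) g x| ≤ β) →
      0 < σ →
      (∃ k, 1 ≤ k ∧ k ≤ n ∧ ∀ x ∈ Set.Icc (1:ℝ) 2, σ ≤ |iteratedDeriv k g x|) →
      0 < ρ →
      volume {x ∈ Set.Icc (1:ℝ) 2 | |g x| ≤ ρ}
        ≤ ENNReal.ofReal (C * (β * σ⁻¹ + 1) * (ρ * σ⁻¹) ^ ((1:ℝ) / n)) := by
  refine ⟨3 ^ n, by positivity, ?_⟩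
  rintro g β σ ρ hg hβ hσ ⟨k, hk, hkn, hσg⟩ hρ
  have hβ0 : 0 ≤ β := (abs_nonneg _).trans (hβ 0 n.zero_le 1 ⟨le_rfl, one_le_two⟩)
  have hβσ : 1 ≤ β * σ⁻¹ + 1 := le_add_of_nonneg_left (mul_nonneg hβ0 (inv_nonneg.2 hσ.le))
  have hdiff : ∀ i < k, ∀ x ∈ Ioo (1 : ℝ) 2, DifferentiableAt ℝ (iteratedDeriv i g) x :=
    fun i hi x hx => (hg.contDiffAt (Icc_mem_nhds hx.1 hx.2)).differentiableAt_iteratedDeriv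
      (by norm_cast; omega)
  have hvol_k : volume {x ∈ Icc (1 : ℝ) 2 | |g x| ≤ ρ}
      ≤ ENNReal.ofReal (3 ^ k * (ρ * σ⁻¹) ^ ((1 : ℝ) / k)) := by
    have hae : {x ∈ Ioo (1 : ℝ) 2 | |g x| ≤ ρ} =ᵐ[volume] {x ∈ Icc (1 : ℝ) 2 | |g x| ≤ ρ} :=
      Ioo_ae_eq_Icc.inter (ae_eq_refl _)
    rw [← measure_congr hae, ← div_eq_mul_inv]
    exact ordConnected_Ioo.volume_sublevel_le_of_le_abs_iteratedDeriv hk hdiff hσ hρ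
      fun x hx => hσg x (Ioo_subset_Icc_self hx)
  have hvol_one : volume {x ∈ Icc (1 : ℝ) 2 | |g x| ≤ ρ} ≤ ENNReal.ofReal 1 :=
    (measure_mono (sep_subset _ _)).trans (by norm_num [volume_Icc])
  calc volume {x ∈ Icc (1 : ℝ) 2 | |g x| ≤ ρ}
      ≤ ENNReal.ofReal (min 1 (3 ^ k * (ρ * σ⁻¹) ^ ((1 : ℝ) / k))) := by
        rw [ENNReal.ofReal_min]
        exact le_min hvol_one hvol_k
    _ ≤ ENNReal.ofReal (3 ^ n * (ρ * σ⁻¹) ^ ((1 : ℝ) / n)) := ENNReal.ofReal_le_ofReal <|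
        min_one_pow_mul_rpow_le (by norm_num) (by positivity) hk hkn
    _ ≤ ENNReal.ofReal (3 ^ n * (β * σ⁻¹ + 1) * (ρ * σ⁻¹) ^ ((1 : ℝ) / n)) := by
        refine ENNReal.ofReal_le_ofReal ?_
        rw [mul_right_comm]
        exact le_mul_of_one_le_right (by positivity) hβσ

/-- Sublevel-set measure estimate for C^{n+1} functions on [1,2]: if the C^n norm
of g' is at most β and some derivative g^{(k)}, 1 ≤ k ≤ n, satisfies |g^{(k)}| ≥ σ > 0
on [1,2], then meas{x ∈ [1,2] : |g x| ≤ ρ} ≤ C_n (βσ⁻¹ + 1)(ρσ⁻¹)^{1/n}. -/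
theorem stmt8 (n : ℕ) (hn : 1 ≤ n) :
    ∃ C : ℝ, 0 < C ∧ ∀ (g : ℝ → ℝ) (β σ ρ : ℝ),
      ContDiffOn ℝ (n + 1) g (Set.Icc 1 2) →
      (∀ k ≤ n, ∀ x ∈ Set.Icc (1:ℝ) 2, |iteratedDeriv (k + 1) g x| ≤ β) →
      0 < σ →
      (∃ k, 1 ≤ k ∧ k ≤ n ∧ ∀ x ∈ Set.Icc (1:ℝ) 2, σ ≤ |iteratedDeriv k g x|) →
      0 < ρ →
      volume {x ∈ Set.Icc (1:ℝ) 2 | |g x| ≤ ρ}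
        ≤ ENNReal.ofReal (C * (β * σ⁻¹ + 1) * (ρ * σ⁻¹) ^ ((1:ℝ) / n)) :=
  stmt8_general n
end

section
/- Let m₁, m₂ be nonzero integers with |m₁| ≥ |m₂| ≥ 1, m ∈ [1,2], and suppose |m₁| − |m₂| ≤ K for some K ≥ 0. Then |r_{m₁}(m) − r_{m₂}(m)| ≤ 2K/(⟨m₁⟩⟨m₂⟩), where r_j(m) = √(j²+m) − |j| and ⟨n⟩ = max{1,|n|}. -/
open Real

/-!
Since `r_j` depends only on `|j|`, this is a statement about `f x = √(x² + m) - x` on `[1, ∞)`.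
Rationalizing, `(f b - f a) (√(a² + m) + √(b² + m)) = (a - b) (f a + f b)`, and
`f x = m / (√(x² + m) + x) ≤ m / (2x)`, which gives `0 ≤ f b - f a ≤ m (a - b) / (2ab)`.
-/

namespace Real

variable {m a b : ℝ}

lemma sqrt_sq_add_sub_sqrt_sq_add_le (hm : 0 ≤ m) (hb : 0 ≤ b) (hab : b ≤ a) :
    √(a ^ 2 + m) - √(b ^ 2 + m) ≤ a - b := by
  have hSb : √(b ^ 2 + m) ^ 2 = b ^ 2 + m := sq_sqrt (by positivity)
  have hbSb : b ≤ √(b ^ 2 + m) := le_sqrt_of_sq_le (by linarith)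
  suffices √(a ^ 2 + m) ≤ √(b ^ 2 + m) + (a - b) by linarith
  rw [sqrt_le_iff]
  exact ⟨by linarith, by nlinarith⟩

lemma sqrt_sq_add_sub_mul_two_le (hm : 0 ≤ m) (a : ℝ) :
    (√(a ^ 2 + m) - a) * (2 * a) ≤ m := by
  have hSa : √(a ^ 2 + m) ^ 2 = a ^ 2 + m := sq_sqrt (by positivity)
  have haSa : a ≤ √(a ^ 2 + m) := le_sqrt_of_sq_le (by linarith)
  nlinarith

lemma sqrt_sq_add_sub_sub_le (hm : 0 ≤ m) (hb : 0 < b) (hab : b ≤ a) :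
    (√(b ^ 2 + m) - b) - (√(a ^ 2 + m) - a) ≤ m / 2 * (a - b) / (a * b) := by
  have ha : 0 < a := hb.trans_le hab
  set Sa := √(a ^ 2 + m)
  set Sb := √(b ^ 2 + m)
  have hSa : Sa ^ 2 = a ^ 2 + m := sq_sqrt (by positivity)
  have hSb : Sb ^ 2 = b ^ 2 + m := sq_sqrt (by positivity)
  have haSa : a ≤ Sa := le_sqrt_of_sq_le (by linarith)
  have hbSb : b ≤ Sb := le_sqrt_of_sq_le (by linarith)
  have hfa := sqrt_sq_add_sub_mul_two_le hm a
  have hfb := sqrt_sq_add_sub_mul_two_le hm b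
  have hrat : ((Sb - b) - (Sa - a)) * (Sa + Sb) = (a - b) * ((Sa - a) + (Sb - b)) := by
    linear_combination hSb - hSa
  have hsum : ((Sa - a) + (Sb - b)) * (a * b) ≤ m / 2 * (Sa + Sb) := by
    nlinarith [mul_le_mul_of_nonneg_left hfa hb.le, mul_le_mul_of_nonneg_left hfb ha.le]
  have hS : 0 < Sa + Sb := by linarith
  rw [le_div_iff₀ (mul_pos ha hb), ← mul_le_mul_iff_of_pos_right hS]
  calc ((Sb - b) - (Sa - a)) * (a * b) * (Sa + Sb)
      = (a - b) * (((Sa - a) + (Sb - b)) * (a * b)) := by rw [mul_right_comm, hrat]; ring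
    _ ≤ (a - b) * (m / 2 * (Sa + Sb)) := mul_le_mul_of_nonneg_left hsum (by linarith)
    _ = m / 2 * (a - b) * (Sa + Sb) := by ring

end Real

theorem stmt10_general (m₁ m₂ : ℤ) (m K : ℝ) (hm : m ∈ Set.Icc (1:ℝ) 2)
    (h2 : 1 ≤ |m₂|) (h12 : |m₂| ≤ |m₁|)
    (hdiff : (|m₁| : ℝ) - (|m₂| : ℝ) ≤ K) :
    |(Real.sqrt ((m₁:ℝ)^2 + m) - |(m₁:ℝ)|) - (Real.sqrt ((m₂:ℝ)^2 + m) - |(m₂:ℝ)|)|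
      ≤ 2 * K / (max 1 |(m₁:ℝ)| * max 1 |(m₂:ℝ)|) := by
  obtain ⟨hm1, hm2⟩ := hm
  have hb1 : (1 : ℝ) ≤ |(m₂ : ℝ)| := by exact_mod_cast h2
  have hab : |(m₂ : ℝ)| ≤ |(m₁ : ℝ)| := by exact_mod_cast h12
  rw [max_eq_right (hb1.trans hab), max_eq_right hb1, ← sq_abs (m₁ : ℝ), ← sq_abs (m₂ : ℝ)]
  set a := |(m₁ : ℝ)|
  set b := |(m₂ : ℝ)|
  have hmono := sqrt_sq_add_sub_sqrt_sq_add_le (m := m) (by linarith) (by linarith) hab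
  rw [abs_sub_comm, abs_of_nonneg (by linarith)]
  calc _ ≤ m / 2 * (a - b) / (a * b) := sqrt_sq_add_sub_sub_le (by linarith) (by linarith) hab
    _ ≤ 2 * K / (a * b) := by gcongr; nlinarith

/-- If |m₁| ≥ |m₂| ≥ 1 are nonzero integers with |m₁| − |m₂| ≤ K, K ≥ 0, and
m ∈ [1,2], then |r_{m₁}(m) − r_{m₂}(m)| ≤ 2K/(⟨m₁⟩⟨m₂⟩), where
r_j(m) = √(j²+m) − |j| and ⟨n⟩ = max{1,|n|}. -/
theorem stmt10 (m₁ m₂ : ℤ) (m K : ℝ) (hm : m ∈ Set.Icc (1:ℝ) 2)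
    (h2 : 1 ≤ |m₂|) (h12 : |m₂| ≤ |m₁|) (hK : 0 ≤ K)
    (hdiff : (|m₁| : ℝ) - (|m₂| : ℝ) ≤ K) :
    |(Real.sqrt ((m₁:ℝ)^2 + m) - |(m₁:ℝ)|) - (Real.sqrt ((m₂:ℝ)^2 + m) - |(m₂:ℝ)|)|
      ≤ 2 * K / (max 1 |(m₁:ℝ)| * max 1 |(m₂:ℝ)|) :=
  stmt10_general m₁ m₂ m K hm h2 h12 hdiff
end

section
/- Let α, β : ℤ → ℕ be finitely supported with α ≠ β, and let m = m(α−β) be the decreasing rearrangement (by absolute value) of the multiset consisting of each nonzero integer j repeated |α_j − β_j| times, with entries m₁, m₂, m₃, .... Let n̂ = n̂(α+β) be the decreasing rearrangement of the multiset where each integer h > 1 is repeated (α_h+β_h)+(α_{−h}+β_{−h}) times and 1 is repeated (α_1+β_1)+(α_{−1}+β_{−1})+(α_0+β_0) times. Then for any θ ∈ (0,1), Σ_{i ≠ m₁, m₂} ⟨i⟩^θ |α_i − β_i| ≤ Σ_{l ≥ 3} n̂_l^θ. -/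
/-!
Let `M` be the multiset in which every index `i` contributes `⟨i⟩` with multiplicity
`|α_i - β_i|`, so that the left-hand sum is the sum of `x ^ θ` over `M` minus its two largest
elements. Since `|α_i - β_i| ≤ α_i + β_i`, `M` is a sub-multiset of the multiset `N` whose
decreasing rearrangement is `n̂(α + β)`. The entries of `M` beyond those of `m(α - β)` come from
`i = 0` and equal `1`, so the two largest elements of `M` are `m₁, m₂`. Finally, deleting the
`k` largest elements of both sides preserves `M ≤ N`, and `x ^ θ ≥ 0`.
-/

open Set Real

/-- Multiset of indices of ℓ = α − β: each integer j repeated |α_j − β_j| times. -/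
noncomputable def ellMultiset (α β : ℤ →₀ ℕ) : Multiset ℤ :=
  (α.support ∪ β.support).val.bind fun j =>
    Multiset.replicate ((α j : ℤ) - (β j : ℤ)).natAbs j

/-- m(α−β): decreasing rearrangement (by absolute value) of the nonzero indices of
α−β with multiplicity |α_j − β_j|, recorded through their absolute values. -/
noncomputable def mList (α β : ℤ →₀ ℕ) : List ℕ :=
  ((((ellMultiset α β).filter (· ≠ (0:ℤ))).map Int.natAbs).sort (· ≤ ·)).reverse

/-- n̂(v): decreasing rearrangement of the multiset where each h > 1 is repeated
v_h + v_{−h} times and 1 is repeated v_1 + v_{−1} + v_0 times; equivalently each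
index j contributes v_j copies of max(1,|j|). -/
noncomputable def nList (v : ℤ →₀ ℕ) : List ℕ :=
  (((Finsupp.toMultiset v).map (fun j : ℤ => max 1 j.natAbs)).sort (· ≤ ·)).reverse

namespace Multiset

theorem sum_map_le_sum_map_of_le {ι M : Type*} [AddCommMonoid M] [PartialOrder M]
    [IsOrderedAddMonoid M] {s t : Multiset ι} {f : ι → M} (hf : ∀ i, 0 ≤ f i) (hst : s ≤ t) :
    (s.map f).sum ≤ (t.map f).sum := by
  obtain ⟨u, rfl⟩ := le_iff_exists_add.1 hst
  rw [map_add, sum_add]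
  exact le_add_of_nonneg_right (sum_nonneg fun x hx => by
    obtain ⟨i, -, rfl⟩ := mem_map.1 hx
    exact hf i)

variable {α : Type*} [LinearOrder α] {s t : Multiset α}

theorem reverse_sort_le (s : Multiset α) : (s.sort (· ≤ ·)).reverse = s.sort (· ≥ ·) :=
  List.Perm.eq_of_pairwise' (List.pairwise_reverse.2 (s.pairwise_sort _)) (s.pairwise_sort _)
    (by rw [← coe_eq_coe, coe_reverse, sort_eq, sort_eq])

theorem sort_ge_add (h : ∀ a ∈ s, ∀ b ∈ t, b ≤ a) :
    (s + t).sort (· ≥ ·) = s.sort (· ≥ ·) ++ t.sort (· ≥ ·) := by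
  refine List.Perm.eq_of_pairwise' ((s + t).pairwise_sort _) ?_ ?_
  · exact List.pairwise_append.2 ⟨s.pairwise_sort _, t.pairwise_sort _,
      fun a ha b hb => h a ((mem_sort _).1 ha) b ((mem_sort _).1 hb)⟩
  · rw [← coe_eq_coe, ← coe_add, sort_eq, sort_eq, sort_eq]

theorem take_sort_ge_add {k : ℕ} (h : ∀ a ∈ s, ∀ b ∈ t, b ≤ a) (hk : k ≤ card s) :
    ((s + t).sort (· ≥ ·)).take k = (s.sort (· ≥ ·)).take k := by
  rw [sort_ge_add h, List.take_append_of_le_length (by rwa [length_sort])]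

theorem sort_ge_eq_cons {a : α} {l : List α} (h : s.sort (· ≥ ·) = a :: l) :
    a ∈ s ∧ (∀ x ∈ s, x ≤ a) ∧ (s.erase a).sort (· ≥ ·) = l := by
  have hs : s = a ::ₘ l := by rw [← s.sort_eq (· ≥ ·), h, cons_coe]
  have hl := s.pairwise_sort (· ≥ ·)
  rw [h, List.pairwise_cons] at hl
  subst hs
  refine ⟨mem_cons_self _ _, fun x hx => ?_, ?_⟩
  · rcases mem_cons.1 hx with rfl | hx
    exacts [le_rfl, hl.1 x hx]
  · rw [erase_cons_head, coe_sort, List.mergeSort_eq_self _ hl.2]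

theorem erase_le_erase_of_forall_le {a b : α} (hst : s ≤ t) (ha : a ∈ s)
    (hsa : ∀ x ∈ s, x ≤ a) (htb : ∀ x ∈ t, x ≤ b) : s.erase a ≤ t.erase b := by
  rcases eq_or_ne a b with rfl | hab
  · exact erase_le_erase a hst
  · have hb : b ∉ s := fun hb =>
      hab (le_antisymm (htb a (mem_of_le hst ha)) (hsa b hb))
    calc s.erase a ≤ s := erase_le a s
      _ = s.erase b := (erase_of_notMem hb).symm
      _ ≤ t.erase b := erase_le_erase b hst

theorem drop_sort_ge_le_drop_sort_ge (k : ℕ) (hst : s ≤ t) :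
    (((s.sort (· ≥ ·)).drop k : List α) : Multiset α) ≤ (t.sort (· ≥ ·)).drop k := by
  induction k generalizing s t with
  | zero => simpa using hst
  | succ k ih =>
    rcases hs : s.sort (· ≥ ·) with _ | ⟨a, l⟩
    · simp
    obtain ⟨ha, hsa, rfl⟩ := sort_ge_eq_cons hs
    rcases ht : t.sort (· ≥ ·) with _ | ⟨b, l'⟩
    · rw [← t.sort_eq (· ≥ ·), ht] at hst
      exact absurd (mem_of_le hst ha) (notMem_zero a)
    obtain ⟨-, htb, rfl⟩ := sort_ge_eq_cons ht
    exact ih (erase_le_erase_of_forall_le hst ha hsa htb)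

theorem sum_map_sub_take_sort_le_drop_sort {f : α → ℝ} (hf : ∀ a, 0 ≤ f a) (k : ℕ)
    (hst : s ≤ t) :
    (s.map f).sum - (((s.sort (· ≥ ·)).take k).map f).sum
      ≤ (((t.sort (· ≥ ·)).drop k).map f).sum := by
  have hs : (s.map f).sum = ((s.sort (· ≥ ·)).map f).sum := by
    rw [← sum_coe, ← map_coe, sort_eq]
  rw [hs, ← List.sum_take_add_sum_drop (List.map f _) k, ← List.map_take, ← List.map_drop,
    add_sub_cancel_left]
  simpa only [sum_coe, map_coe] using sum_map_le_sum_map_of_le hf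
    (drop_sort_ge_le_drop_sort_ge k hst)

end Multiset

/-- The paper's `⟨j⟩ = max 1 |j|`. -/
def bracket (j : ℤ) : ℕ := max 1 j.natAbs

theorem cast_bracket (j : ℤ) : ((bracket j : ℕ) : ℝ) = max 1 |(j : ℝ)| := by
  simp [bracket, Nat.cast_natAbs]

theorem map_bracket_eq_add (s : Multiset ℤ) :
    s.map bracket = (s.filter (· ≠ 0)).map Int.natAbs + Multiset.replicate (s.count 0) 1 := by
  conv_lhs => rw [← Multiset.filter_add_not (· ≠ 0) s]
  rw [Multiset.map_add]
  congr 1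
  · exact Multiset.map_congr rfl fun j hj =>
      max_eq_right (Int.natAbs_pos.2 (Multiset.mem_filter.1 hj).2)
  · simp [Multiset.filter_eq', bracket]

theorem count_ellMultiset (α β : ℤ →₀ ℕ) (j : ℤ) :
    (ellMultiset α β).count j = ((α j : ℤ) - β j).natAbs := by
  simp only [ellMultiset, Multiset.count_bind, Multiset.count_replicate]
  rw [← Finset.sum_eq_multiset_sum, Finset.sum_ite_eq']
  split_ifs with hj
  · rfl
  · simp only [Finset.mem_union, Finsupp.mem_support_iff, not_or, not_not] at hj
    simp [hj.1, hj.2]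

theorem ellMultiset_le_toMultiset_add (α β : ℤ →₀ ℕ) :
    ellMultiset α β ≤ Finsupp.toMultiset (α + β) := by
  refine Multiset.le_iff_count.2 fun j => ?_
  rw [count_ellMultiset, Finsupp.count_toMultiset, Finsupp.add_apply]
  omega

theorem finsum_mul_abs_sub_eq_sum_map_ellMultiset (α β : ℤ →₀ ℕ) (f : ℤ → ℝ) :
    ∑ᶠ i, f i * |(α i : ℝ) - β i| = ((ellMultiset α β).map f).sum := by
  have habs (i : ℤ) : |(α i : ℝ) - β i| = (ellMultiset α β).count i := by
    rw [count_ellMultiset, Nat.cast_natAbs]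
    push_cast
    rfl
  rw [Finset.sum_multiset_map_count, finsum_eq_sum_of_support_subset]
  · exact Finset.sum_congr rfl fun i _ => by rw [habs, nsmul_eq_mul, mul_comm]
  · intro i hi
    rw [Finset.mem_coe, Multiset.mem_toFinset, ← Multiset.count_ne_zero]
    intro h
    exact hi (by simp [habs, h])

theorem mList_eq_sort_ge (α β : ℤ →₀ ℕ) :
    mList α β = (((ellMultiset α β).filter (· ≠ 0)).map Int.natAbs).sort (· ≥ ·) :=
  Multiset.reverse_sort_le _

theorem nList_eq_sort_ge (v : ℤ →₀ ℕ) :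
    nList v = ((Finsupp.toMultiset v).map bracket).sort (· ≥ ·) :=
  Multiset.reverse_sort_le _

theorem take_mList (α β : ℤ →₀ ℕ) {k : ℕ} (hk : k ≤ (mList α β).length) :
    (mList α β).take k = (((ellMultiset α β).map bracket).sort (· ≥ ·)).take k := by
  rw [mList_eq_sort_ge, map_bracket_eq_add, Multiset.take_sort_ge_add]
  · intro a ha b hb
    obtain ⟨j, hj, rfl⟩ := Multiset.mem_map.1 ha
    rw [Multiset.eq_of_mem_replicate hb]
    exact Int.natAbs_pos.2 (Multiset.mem_filter.1 hj).2
  · rwa [mList_eq_sort_ge, Multiset.length_sort] at hk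

theorem stmt13_general (θ : ℝ) (α β : ℤ →₀ ℕ)
    (hlen : 2 ≤ (mList α β).length) :
    (∑ᶠ i : ℤ, (max 1 |(i:ℝ)|) ^ θ * |(α i : ℝ) - (β i : ℝ)|)
        - (((mList α β).take 2).map (fun a : ℕ => (a:ℝ) ^ θ)).sum
      ≤ (((nList (α + β)).drop 2).map (fun a : ℕ => (a:ℝ) ^ θ)).sum := by
  have hsum : ∑ᶠ i : ℤ, (max 1 |(i:ℝ)|) ^ θ * |(α i : ℝ) - (β i : ℝ)|
      = (((ellMultiset α β).map bracket).map fun a : ℕ => (a:ℝ) ^ θ).sum := by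
    simp_rw [← cast_bracket, finsum_mul_abs_sub_eq_sum_map_ellMultiset, Multiset.map_map]
    rfl
  rw [hsum, take_mList α β hlen, nList_eq_sort_ge]
  exact Multiset.sum_map_sub_take_sort_le_drop_sort (fun a => rpow_nonneg a.cast_nonneg θ) 2
    (Multiset.map_le_map (ellMultiset_le_toMultiset_add α β))

/-- Σ_{i ≠ m₁,m₂} ⟨i⟩^θ |α_i − β_i| ≤ Σ_{l ≥ 3} n̂_l^θ: the sum over all indices,
minus the two largest entries ⟨m₁⟩^θ, ⟨m₂⟩^θ of m(α−β), is bounded by the sum of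
n̂_l^θ for l ≥ 3. -/
theorem stmt13 (θ : ℝ) (hθ : θ ∈ Set.Ioo (0:ℝ) 1) (α β : ℤ →₀ ℕ) (hne : α ≠ β)
    (hlen : 2 ≤ (mList α β).length) :
    (∑ᶠ i : ℤ, (max 1 |(i:ℝ)|) ^ θ * |(α i : ℝ) - (β i : ℝ)|)
        - (((mList α β).take 2).map (fun a : ℕ => (a:ℝ) ^ θ)).sum
      ≤ (((nList (α + β)).drop 2).map (fun a : ℕ => (a:ℝ) ^ θ)).sum :=
  stmt13_general θ α β hlen
end

section
/- Let α, β : ℤ → ℕ be finitely supported, let m = m(α−β) have D entries and n̂ = n̂(α+β) have N entries (as rearrangements defined below). Then D + α₀ + β₀ ≤ N, and componentwise (|m₁|, ..., |m_D|, 1, ..., 1) ≤ (n̂₁, ..., n̂_N) where 1 is repeated N − D times. -/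
/-!
Each index `j` contributes `α j + β j` entries `max 1 |j|` to `n̂(α + β)` and, if `j ≠ 0`,
`|α j - β j| ≤ α j + β j` entries `|j|` to `m(α - β)`. Matching every entry `|j|` of `m`
with an entry of `n̂` coming from `j`, and the remaining entries coming from `j` (all of them
for `j = 0`) with `1`s, dominates `m` plus a pad of `1`s entrywise by `n̂` as multisets.
Sorting preserves such a domination, and the pad has at least `α 0 + β 0` ones.
-/

open Set Real

open Multiset

namespace List

variable {α : Type*} [LinearOrder α]

theorem orderedInsert_eq_cons_of_pairwise {a : α} {l : List α}
    (h : (a :: l).Pairwise (· ≤ ·)) : l.orderedInsert (· ≤ ·) a = a :: l := by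
  cases l with
  | nil => rfl
  | cons b l => exact orderedInsert_cons_of_le _ l (rel_of_pairwise_cons h mem_cons_self)

theorem forall₂_orderedInsert {l₁ l₂ : List α} (h : Forall₂ (· ≤ ·) l₁ l₂)
    (h₁ : l₁.Pairwise (· ≤ ·)) (h₂ : l₂.Pairwise (· ≤ ·)) {a b : α} (hab : a ≤ b) :
    Forall₂ (· ≤ ·) (l₁.orderedInsert (· ≤ ·) a) (l₂.orderedInsert (· ≤ ·) b) := by
  induction h generalizing a b with
  | nil => simpa using hab
  | @cons p q l₁ l₂ hpq h ih =>
    replace ih := @ih h₁.of_cons h₂.of_cons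
    rw [orderedInsert_cons, orderedInsert_cons]
    split_ifs with hap hbq hbq
    · exact .cons hab (.cons hpq h)
    · rw [← orderedInsert_eq_cons_of_pairwise h₁]
      exact .cons (hap.trans hpq) (ih (hpq.trans (not_le.1 hbq).le))
    · rw [← orderedInsert_eq_cons_of_pairwise h₂]
      exact .cons ((not_le.1 hap).le.trans hab) (ih (hab.trans hbq))
    · exact .cons hpq (ih hab)

end List

namespace Multiset

theorem bind_replicate {α ι : Type*} (s : Multiset ι) (f : ι → ℕ) (a : α) :
    s.bind (fun i => replicate (f i) a) = replicate (s.map f).sum a := by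
  induction s using Multiset.induction with
  | empty => simp
  | cons i s ih => simp [ih, replicate_add]

theorem rel_replicate_add_replicate {α : Type*} [Preorder α] {a b c : α} (ha : a ≤ c)
    (hb : b ≤ c) {m n : ℕ} (hmn : m ≤ n) :
    Rel (· ≤ ·) (replicate m a + replicate (n - m) b) (replicate n c) := by
  refine rel_replicate_right.2 ⟨by simp [hmn], ?_⟩
  simp only [mem_add]
  rintro x (hx | hx) <;> rw [eq_of_mem_replicate hx] <;> assumption

variable {α : Type*} [LinearOrder α]

theorem sort_cons_eq_orderedInsert (a : α) (s : Multiset α) :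
    sort (a ::ₘ s) = (sort s).orderedInsert (· ≤ ·) a :=
  Quot.inductionOn s fun l => by simp [List.mergeSort_eq_insertionSort]

theorem forall₂_sort_of_rel {s t : Multiset α} (h : Rel (· ≤ ·) s t) :
    List.Forall₂ (· ≤ ·) (sort s) (sort t) := by
  induction h with
  | zero => simp
  | cons hab _ ih =>
    rw [sort_cons_eq_orderedInsert, sort_cons_eq_orderedInsert]
    exact List.forall₂_orderedInsert ih (pairwise_sort _ _) (pairwise_sort _ _) hab

theorem sort_replicate_add {a : α} {s : Multiset α} (h : ∀ x ∈ s, a ≤ x) (k : ℕ) :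
    sort (replicate k a + s) = List.replicate k a ++ sort s := by
  induction k with
  | zero => simp
  | succ k ih =>
    have ha : ∀ x ∈ replicate k a + s, a ≤ x := by
      simp only [mem_add]
      rintro x (hx | hx)
      exacts [(eq_of_mem_replicate hx).ge, h x hx]
    rw [replicate_succ, cons_add, sort_cons _ _ _ ha, ih, List.replicate_succ, List.cons_append]

end Multiset

theorem Finsupp.toMultiset_eq_bind {α : Type*} (v : α →₀ ℕ) :
    toMultiset v = v.support.val.bind fun a => replicate (v a) a := by
  rw [toMultiset_apply, Finsupp.sum]
  simp_rw [nsmul_singleton]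
  rfl

section

variable (α β : ℤ →₀ ℕ)

def mCount (j : ℤ) : ℕ := if j = 0 then 0 else ((α j : ℤ) - β j).natAbs

noncomputable def mMultiset : Multiset ℕ := ((ellMultiset α β).filter (· ≠ 0)).map Int.natAbs

noncomputable def nMultiset (v : ℤ →₀ ℕ) : Multiset ℕ :=
  (Finsupp.toMultiset v).map fun j => max 1 j.natAbs

theorem mList_eq : mList α β = (sort (mMultiset α β)).reverse := rfl

theorem nList_eq (v : ℤ →₀ ℕ) : nList v = (sort (nMultiset v)).reverse := rfl

theorem mCount_le (j : ℤ) : mCount α β j ≤ (α + β) j := by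
  unfold mCount
  split_ifs
  · exact Nat.zero_le _
  · simpa using Int.natAbs_sub_le (α j : ℤ) (β j)

theorem one_le_of_mem_mMultiset {x : ℕ} (hx : x ∈ mMultiset α β) : 1 ≤ x := by
  obtain ⟨j, hj, rfl⟩ := mem_map.1 hx
  exact Int.natAbs_pos.2 (mem_filter.1 hj).2

theorem mMultiset_eq_bind :
    mMultiset α β = (α + β).support.val.bind fun j => replicate (mCount α β j) j.natAbs := by
  rw [mMultiset, ellMultiset, filter_bind, map_bind, Finsupp.support_add_eq_union]
  refine bind_congr fun j _ => ?_
  by_cases hj : j = 0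
  · rw [filter_eq_nil.2 fun x hx => by simp [eq_of_mem_replicate hx, hj]]
    simp [mCount, hj]
  · rw [filter_eq_self.2 fun x hx => by rwa [eq_of_mem_replicate hx]]
    simp [mCount, hj]

theorem nMultiset_eq_bind (v : ℤ →₀ ℕ) :
    nMultiset v = v.support.val.bind fun j => replicate (v j) (max 1 j.natAbs) := by
  rw [nMultiset, Finsupp.toMultiset_eq_bind, map_bind]
  simp

theorem exists_rel_replicate_one_add_mMultiset :
    ∃ K, α 0 + β 0 ≤ K ∧
      Rel (· ≤ ·) (replicate K 1 + mMultiset α β) (nMultiset (α + β)) := by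
  set v := α + β
  refine ⟨(v.support.val.map fun j => v j - mCount α β j).sum, ?_, ?_⟩
  · by_cases h0 : 0 ∈ v.support
    · simpa [mCount, v] using
        Finset.single_le_sum (fun j _ => Nat.zero_le (v j - mCount α β j)) h0
    · simp_all [v]
  · rw [← bind_replicate, mMultiset_eq_bind, nMultiset_eq_bind, add_comm, ← bind_add]
    refine rel_bind (r := fun i j => i = j) ?_ (rel_eq.2 rfl)
    rintro j _ rfl
    exact rel_replicate_add_replicate (le_max_right _ _) (le_max_left _ _) (mCount_le α β j)

end

/-- D + α₀ + β₀ ≤ N and componentwise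
(|m₁|,…,|m_D|,1,…,1) ≤ (n̂₁,…,n̂_N), with 1 repeated N − D times. -/
theorem stmt14 (α β : ℤ →₀ ℕ) :
    (mList α β).length + α 0 + β 0 ≤ (nList (α + β)).length ∧
    List.Forall₂ (· ≤ ·)
      (mList α β ++ List.replicate ((nList (α + β)).length - (mList α β).length) 1)
      (nList (α + β)) := by
  obtain ⟨K, hK, hrel⟩ := exists_rel_replicate_one_add_mMultiset α β
  have hcard := card_eq_card_of_rel hrel
  have hsort := forall₂_sort_of_rel hrel
  rw [sort_replicate_add (fun _ => one_le_of_mem_mMultiset α β)] at hsort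
  rw [mList_eq, nList_eq]
  simp only [List.length_reverse, length_sort, card_add, card_replicate] at hcard ⊢
  refine ⟨by omega, ?_⟩
  rw [← hcard, Nat.add_sub_cancel, ← List.reverse_replicate, ← List.reverse_append]
  exact List.forall₂_reverse_iff.2 hsort
end

section
/- The series Σ_{ℓ} Π_{j ∈ ℤ} 1/(1 + |ℓ_j|² ⟨j⟩²), summed over all nonzero finitely supported ℓ : ℤ → ℤ, converges (is bounded by an absolute constant). -/
open Set Real

noncomputable section Aux16

/-- ⟨j⟩ -/
private def mj (j : ℤ) : ℝ := max 1 |(j:ℝ)|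

private lemma mj_pos (j : ℤ) : 0 < mj j := lt_of_lt_of_le one_pos (le_max_left _ _)

private lemma one_le_mj (j : ℤ) : 1 ≤ mj j := le_max_left _ _

/-- the summand -/
private def Fj (j n : ℤ) : ℝ := 1 / (1 + (n:ℝ)^2 * (mj j)^2)

private lemma Fj_denom_pos (j n : ℤ) : 0 < 1 + (n:ℝ)^2 * (mj j)^2 := by
  nlinarith [sq_nonneg ((n:ℝ)), sq_nonneg (mj j), mj_pos j]

private lemma Fj_nonneg (j n : ℤ) : 0 ≤ Fj j n :=
  le_of_lt (div_pos one_pos (Fj_denom_pos j n))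

private lemma Fj_zero (j : ℤ) : Fj j 0 = 1 := by simp [Fj]

/-- auxiliary comparison functions -/
private def Gn (n : ℤ) : ℝ := 1 / (n:ℝ)^2

private def Dn (n : ℤ) : ℝ := if n = 0 then 1 else 0

private lemma Gn_nonneg (n : ℤ) : 0 ≤ Gn n := by
  unfold Gn; positivity

private lemma Dn_nonneg (n : ℤ) : 0 ≤ Dn n := by unfold Dn; split <;> norm_num

private lemma summable_Gn : Summable Gn := by
  have := (Real.summable_one_div_int_pow (p := 2)).2 (by norm_num)
  exact this

private lemma summable_Dn : Summable Dn := by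
  apply summable_of_ne_finset_zero (s := {(0:ℤ)})
  intro n hn
  simp only [Finset.mem_singleton] at hn
  simp [Dn, hn]

private lemma Fj_le (j n : ℤ) : Fj j n ≤ Dn n + Gn n / (mj j)^2 := by
  rcases eq_or_ne n 0 with h | h
  · subst h
    simp only [Fj, Dn, Gn, if_pos rfl, Int.cast_zero]
    norm_num
  · have hn2 : (0:ℝ) < (n:ℝ)^2 := sq_pos_of_ne_zero (Int.cast_ne_zero.mpr h)
    have hm : (0:ℝ) < (mj j)^2 := pow_pos (mj_pos j) 2
    simp only [Fj, Dn, Gn, if_neg h, zero_add]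
    rw [div_div]
    apply one_div_le_one_div_of_le (mul_pos hn2 hm)
    linarith

private def Kc : ℝ := ∑' n : ℤ, Gn n

private lemma Kc_nonneg : 0 ≤ Kc := tsum_nonneg Gn_nonneg

private def Hj (j : ℤ) : ℝ := Kc * (Dn j + Gn j)

private lemma Hj_nonneg (j : ℤ) : 0 ≤ Hj j :=
  mul_nonneg Kc_nonneg (add_nonneg (Dn_nonneg j) (Gn_nonneg j))

private lemma summable_Hj : Summable Hj := (summable_Dn.add summable_Gn).mul_left Kc

private def Lc : ℝ := ∑' j : ℤ, Hj j

private lemma sumB_le_exp (j : ℤ) (B : Finset ℤ) :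
    ∑ n ∈ B, Fj j n ≤ Real.exp (Hj j) := by
  classical
  have h1 : ∑ n ∈ B, Fj j n ≤ ∑ n ∈ B, (Dn n + Gn n / (mj j)^2) :=
    Finset.sum_le_sum fun n _ => Fj_le j n
  have h2 : ∑ n ∈ B, Dn n ≤ 1 := by
    have : ∑ n ∈ B, Dn n = if (0:ℤ) ∈ B then 1 else 0 := by
      simp only [Dn]
      rw [Finset.sum_ite_eq' B (0:ℤ) (fun _ => (1:ℝ))]
    rw [this]; split <;> norm_num
  have h3 : ∑ n ∈ B, Gn n / (mj j)^2 ≤ Kc / (mj j)^2 := by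
    rw [← Finset.sum_div]
    have hs : ∑ n ∈ B, Gn n ≤ Kc := Summable.sum_le_tsum B (fun n _ => Gn_nonneg n) summable_Gn
    exact (div_le_div_iff_of_pos_right (pow_pos (mj_pos j) 2)).2 hs
  have h4 : ∑ n ∈ B, (Dn n + Gn n / (mj j)^2)
      = (∑ n ∈ B, Dn n) + ∑ n ∈ B, Gn n / (mj j)^2 := Finset.sum_add_distrib
  have h5 : Kc / (mj j)^2 ≤ Hj j := by
    unfold Hj
    rcases eq_or_ne j 0 with rfl | hj
    · have hm : mj (0:ℤ) = 1 := by simp [mj]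
      rw [hm]
      simp only [Dn, Gn, if_pos rfl, Int.cast_zero]
      norm_num
    · have hmj : mj j = |(j:ℝ)| := by
        unfold mj
        have : (1:ℝ) ≤ |(j:ℝ)| := by
          rw [← Int.cast_abs]
          exact_mod_cast Int.one_le_abs hj
        exact max_eq_right this
      rw [hmj, sq_abs]
      simp only [Dn, Gn, if_neg hj, zero_add]
      rw [mul_one_div]
  have h6 : 1 + Hj j ≤ Real.exp (Hj j) := by
    have := Real.add_one_le_exp (Hj j)
    linarith
  linarith

private lemma main_bound (S : Finset (ℤ →₀ ℤ)) :
    ∑ ℓ ∈ S, ∏ᶠ j : ℤ, Fj j (ℓ j) ≤ Real.exp Lc := by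
  classical
  set T : Finset ℤ := S.sup Finsupp.support with hT
  set N : ℕ := S.sup (fun ℓ => ℓ.support.sup fun j => (ℓ j).natAbs) with hN
  set B : Finset ℤ := Finset.Icc (-(N:ℤ)) (N:ℤ) with hB
  have hsupp : ∀ ℓ ∈ S, ∀ j, j ∉ T → ℓ j = 0 := by
    intro ℓ hℓ j hj
    by_contra h
    exact hj (Finset.le_sup (f := Finsupp.support) hℓ (Finsupp.mem_support_iff.mpr h))
  have hprod : ∀ ℓ ∈ S, ∏ᶠ j : ℤ, Fj j (ℓ j) = ∏ j ∈ T, Fj j (ℓ j) := by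
    intro ℓ hℓ
    apply finprod_eq_finset_prod_of_mulSupport_subset
    intro j hj
    simp only [Function.mem_mulSupport] at hj
    by_contra hjT
    exact hj (by rw [hsupp ℓ hℓ j hjT, Fj_zero])
  have hmem : ∀ ℓ ∈ S, ∀ j, ℓ j ∈ B := by
    intro ℓ hℓ j
    rcases em (j ∈ ℓ.support) with hjs | hjs
    · have h1 : (ℓ j).natAbs ≤ N :=
        le_trans (Finset.le_sup (f := fun j => (ℓ j).natAbs) hjs)
          (Finset.le_sup (f := fun ℓ => ℓ.support.sup fun j => (ℓ j).natAbs) hℓ)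
      have h2 : |ℓ j| ≤ (N:ℤ) := by
        rw [Int.abs_eq_natAbs]
        exact_mod_cast h1
      exact Finset.mem_Icc.mpr (abs_le.mp h2)
    · rw [Finsupp.notMem_support_iff.mp hjs]
      simp only [hB, Finset.mem_Icc]
      constructor
      · simp
      · simp
  have key : ∑ ℓ ∈ S, ∏ j ∈ T, Fj j (ℓ j) ≤ ∏ j ∈ T, ∑ n ∈ B, Fj j n := by
    rw [Finset.prod_sum]
    have hstep : ∑ ℓ ∈ S, ∏ j ∈ T, Fj j (ℓ j)
        = ∑ p ∈ S.image (fun ℓ => (fun a _ => ℓ a : ∀ a ∈ T, ℤ)),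
            ∏ x ∈ T.attach, Fj x.1 (p x.1 x.2) := by
      rw [Finset.sum_image ?_]
      · apply Finset.sum_congr rfl
        intro ℓ hℓ
        exact (Finset.prod_attach T (fun j => Fj j (ℓ j))).symm
      · intro ℓ1 h1 ℓ2 h2 h
        ext j
        rcases em (j ∈ T) with hj | hj
        · exact congrFun (congrFun h j) hj
        · rw [hsupp ℓ1 h1 j hj, hsupp ℓ2 h2 j hj]
    rw [hstep]
    apply Finset.sum_le_sum_of_subset_of_nonneg
    · intro p hp
      simp only [Finset.mem_image] at hp
      obtain ⟨ℓ, hℓ, rfl⟩ := hp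
      exact Finset.mem_pi.mpr fun a ha => hmem ℓ hℓ a
    · intro p _ _
      exact Finset.prod_nonneg fun x _ => Fj_nonneg _ _
  calc ∑ ℓ ∈ S, ∏ᶠ j : ℤ, Fj j (ℓ j)
      = ∑ ℓ ∈ S, ∏ j ∈ T, Fj j (ℓ j) := Finset.sum_congr rfl hprod
    _ ≤ ∏ j ∈ T, ∑ n ∈ B, Fj j n := key
    _ ≤ ∏ j ∈ T, Real.exp (Hj j) :=
        Finset.prod_le_prod (fun j _ => Finset.sum_nonneg fun n _ => Fj_nonneg j n)
          (fun j _ => sumB_le_exp j B)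
    _ = Real.exp (∑ j ∈ T, Hj j) := (Real.exp_sum T Hj).symm
    _ ≤ Real.exp Lc :=
        Real.exp_le_exp.mpr (Summable.sum_le_tsum T (fun j _ => Hj_nonneg j) summable_Hj)

end Aux16

/-- The series Σ_ℓ Π_j 1/(1 + |ℓ_j|²⟨j⟩²), over all nonzero finitely supported
ℓ : ℤ → ℤ, converges. -/
theorem stmt16 :
    Summable (fun ℓ : {ℓ : ℤ →₀ ℤ // ℓ ≠ 0} =>
      ∏ᶠ j : ℤ, (1:ℝ) / (1 + |(ℓ.1 j : ℝ)|^2 * (max 1 |(j:ℝ)|)^2)) := by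
  have hF : ∀ (ℓ : ℤ →₀ ℤ) (j : ℤ),
      (1:ℝ) / (1 + |(ℓ j : ℝ)|^2 * (max 1 |(j:ℝ)|)^2) = Fj j (ℓ j) := by
    intro ℓ j
    unfold Fj mj
    rw [sq_abs]
  have key : Summable (fun ℓ : ℤ →₀ ℤ =>
      ∏ᶠ j : ℤ, (1:ℝ) / (1 + |(ℓ j : ℝ)|^2 * (max 1 |(j:ℝ)|)^2)) := by
    have heq : (fun ℓ : ℤ →₀ ℤ =>
        ∏ᶠ j : ℤ, (1:ℝ) / (1 + |(ℓ j : ℝ)|^2 * (max 1 |(j:ℝ)|)^2))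
        = fun ℓ => ∏ᶠ j : ℤ, Fj j (ℓ j) := by
      funext ℓ
      exact finprod_congr fun j => hF ℓ j
    rw [heq]
    apply summable_of_sum_le
    · intro ℓ
      exact finprod_nonneg fun j => Fj_nonneg j (ℓ j)
    · exact main_bound
  exact key.comp_injective Subtype.coe_injective
end

section
/- Let m ∈ [1,2], ω_j = √(j²+m), and let ℓ = α−β with α,β : ℤ → ℕ finitely supported, N := |α|+|β|, satisfying Σ_i (α_i−β_i)|i| ≤ 10 Σ_i |α_i−β_i|. Let m₁, m₂, m₃ be the three largest (in absolute value) entries of the rearrangement m(ℓ), with signs σ_l = sign(α_{m_l}−β_{m_l}). If σ₁σ₂ = 1 then |σ₁ ω_{m₁} + σ₂ ω_{m₂}| ≤ 22 N ⟨m₃⟩ implies |m₁|, |m₂| ≤ 22 N ⟨m₃⟩; more precisely, from |ω·ℓ| ≤ 20N and |ω·ℓ̃| ≤ 2N⟨m₃⟩ (where ℓ̃ = ℓ − σ₁e_{m₁} − σ₂e_{m₂}) one deduces |σ₁ω_{m₁}+σ₂ω_{m₂}| ≤ 22N⟨m₃⟩. -/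
open Set Real

/-!
Removing the two leading modes from `ℓ` changes `ω · ℓ` by exactly `σ₁ ω_{m₁} + σ₂ ω_{m₂}`, so
the triangle inequality bounds that quantity by `20N + 2N⟨m₃⟩ ≤ 22N⟨m₃⟩`. When the two signs
agree there is no cancellation: the quantity is `ω_{m₁} + ω_{m₂}`, and `|j| ≤ ω_j` bounds both
modes.
-/

section IntCastWeightedSum

variable {α R : Type*} [Ring R]

lemma finite_support_intCast_mul (f : α →₀ ℤ) (w : α → R) :
    (Function.support fun j => (f j : R) * w j).Finite :=
  Set.Finite.subset f.hasFiniteSupport fun j hj h0 => hj (by simp [h0])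

lemma finsum_intCast_sub_mul (f g : α →₀ ℤ) (w : α → R) :
    ∑ᶠ j, ((f - g) j : R) * w j = ∑ᶠ j, (f j : R) * w j - ∑ᶠ j, (g j : R) * w j := by
  simp only [Finsupp.coe_sub, Pi.sub_apply, Int.cast_sub, sub_mul]
  exact finsum_sub_distrib (finite_support_intCast_mul f w) (finite_support_intCast_mul g w)

lemma finsum_intCast_single_mul (a : α) (c : ℤ) (w : α → R) :
    ∑ᶠ j, (Finsupp.single a c j : R) * w j = c * w a := by
  rw [finsum_eq_single _ a fun j hj => by simp [Finsupp.single_eq_of_ne hj]]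
  simp

end IntCastWeightedSum

theorem stmt19_general (m : ℝ) (hm : m ∈ Set.Icc (1:ℝ) 2)
    (ℓ ℓt : ℤ →₀ ℤ) (m₁ m₂ m₃ : ℤ) (σ₁ σ₂ : ℤ)
    (N : ℕ)
    (hℓt : ℓt = ℓ - Finsupp.single m₁ σ₁ - Finsupp.single m₂ σ₂)
    (h1 : |∑ᶠ j : ℤ, (ℓ j : ℝ) * Real.sqrt ((j:ℝ)^2 + m)| ≤ 20 * N)
    (h2 : |∑ᶠ j : ℤ, (ℓt j : ℝ) * Real.sqrt ((j:ℝ)^2 + m)|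
      ≤ 2 * N * max 1 |(m₃:ℝ)|) :
    |(σ₁ : ℝ) * Real.sqrt ((m₁:ℝ)^2 + m) + (σ₂ : ℝ) * Real.sqrt ((m₂:ℝ)^2 + m)|
      ≤ 22 * N * max 1 |(m₃:ℝ)| ∧
    (σ₁ * σ₂ = 1 →
      (|m₁| : ℝ) ≤ 22 * N * max 1 |(m₃:ℝ)| ∧ (|m₂| : ℝ) ≤ 22 * N * max 1 |(m₃:ℝ)|) := by
  set ω : ℤ → ℝ := fun j => √((j:ℝ)^2 + m)
  have hdiff : (σ₁ : ℝ) * ω m₁ + σ₂ * ω m₂ =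
      ∑ᶠ j, (ℓ j : ℝ) * ω j - ∑ᶠ j, (ℓt j : ℝ) * ω j := by
    simp only [hℓt, finsum_intCast_sub_mul, finsum_intCast_single_mul]
    ring
  have hsum : |(σ₁ : ℝ) * ω m₁ + σ₂ * ω m₂| ≤ 22 * N * max 1 |(m₃:ℝ)| := by
    have hM : (1:ℝ) ≤ max 1 |(m₃:ℝ)| := le_max_left _ _
    rw [hdiff]
    calc _ ≤ |∑ᶠ j, (ℓ j : ℝ) * ω j| + |∑ᶠ j, (ℓt j : ℝ) * ω j| := abs_sub _ _
      _ ≤ 20 * N + 2 * N * max 1 |(m₃:ℝ)| := add_le_add h1 h2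
      _ ≤ 22 * N * max 1 |(m₃:ℝ)| := by nlinarith [N.cast_nonneg (α := ℝ)]
  refine ⟨hsum, fun hσ => ?_⟩
  obtain rfl := Int.eq_of_mul_eq_one hσ
  have hσ_abs : |(σ₁ : ℝ)| = 1 := by
    exact_mod_cast Int.isUnit_iff_abs_eq.mp (.of_mul_eq_one _ hσ)
  rw [← mul_add, abs_mul, hσ_abs, one_mul, abs_of_nonneg (by positivity)] at hsum
  have hω : ∀ j : ℤ, |(j:ℝ)| ≤ ω j := fun j => Real.abs_le_sqrt (by linarith [hm.1])
  exact ⟨by linarith [hω m₁, Real.sqrt_nonneg ((m₂:ℝ)^2 + m)],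
    by linarith [hω m₂, Real.sqrt_nonneg ((m₁:ℝ)^2 + m)]⟩

/-- Step 2 of the improved estimates: with ℓ̃ = ℓ − σ₁e_{m₁} − σ₂e_{m₂}, from
|ω·ℓ| ≤ 20N and |ω·ℓ̃| ≤ 2N⟨m₃⟩ one deduces |σ₁ω_{m₁} + σ₂ω_{m₂}| ≤ 22N⟨m₃⟩;
and if moreover σ₁σ₂ = 1 then |m₁|, |m₂| ≤ 22N⟨m₃⟩. -/
theorem stmt19 (m : ℝ) (hm : m ∈ Set.Icc (1:ℝ) 2)
    (ℓ ℓt : ℤ →₀ ℤ) (m₁ m₂ m₃ : ℤ) (σ₁ σ₂ : ℤ)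
    (hσ₁ : σ₁ = 1 ∨ σ₁ = -1) (hσ₂ : σ₂ = 1 ∨ σ₂ = -1)
    (hσ₁def : σ₁ = Int.sign (ℓ m₁)) (hσ₂def : σ₂ = Int.sign (ℓ m₂))
    (hord : |m₃| ≤ |m₂| ∧ |m₂| ≤ |m₁|)
    (N : ℕ)
    (hℓt : ℓt = ℓ - Finsupp.single m₁ σ₁ - Finsupp.single m₂ σ₂)
    (h1 : |∑ᶠ j : ℤ, (ℓ j : ℝ) * Real.sqrt ((j:ℝ)^2 + m)| ≤ 20 * N)
    (h2 : |∑ᶠ j : ℤ, (ℓt j : ℝ) * Real.sqrt ((j:ℝ)^2 + m)|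
      ≤ 2 * N * max 1 |(m₃:ℝ)|) :
    |(σ₁ : ℝ) * Real.sqrt ((m₁:ℝ)^2 + m) + (σ₂ : ℝ) * Real.sqrt ((m₂:ℝ)^2 + m)|
      ≤ 22 * N * max 1 |(m₃:ℝ)| ∧
    (σ₁ * σ₂ = 1 →
      (|m₁| : ℝ) ≤ 22 * N * max 1 |(m₃:ℝ)| ∧ (|m₂| : ℝ) ≤ 22 * N * max 1 |(m₃:ℝ)|) :=
  stmt19_general m hm ℓ ℓt m₁ m₂ m₃ σ₁ σ₂ N hℓt h1 h2
end
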